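/- Let π_t be a deterministic policy with π_t(s) ∈ argmax_{a} ζ(s,a)f_t(s,a), and let π̃ be a policy such that π̃(a|s) > 0 implies ζ(s,a) = 1 or a = a_abs (with Q^{π̃}(s,a_abs) = 0). Then v^{π̃} − v^{π_t} ≤ Σ_{h≥0} γ^h ( ‖ζ(Q^{π̃} − f_t)‖_{1, η_h^{π_t}×π̃} + ‖ζ(Q^{π̃} − f_t)‖_{1, η_h^{π_t}×π_t} ). -/

import Mathlib

open scoped BigOperators

/-- A finite Markov decision process with transition probabilities `P`,
reward function `r`, discount factor `γ`, and initial distribution `ρ`. -/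
structure MDP (S A : Type) [Fintype S] [Fintype A] where
  P : S → A → S → ℝ
  r : S → A → ℝ
  γ : ℝ
  ρ : S → ℝ

variable {S A : Type} [Fintype S] [Fintype A]

/-- `P` has nonnegative rows summing to one, `ρ` is a distribution, `0 ≤ γ < 1`. -/
def IsValidMDP (M : MDP S A) : Prop :=
  (∀ s a s', 0 ≤ M.P s a s') ∧ (∀ s a, ∑ s' : S, M.P s a s' = 1) ∧
  (∀ s, 0 ≤ M.ρ s) ∧ (∑ s : S, M.ρ s = 1) ∧ 0 ≤ M.γ ∧ M.γ < 1

/-- A (stationary, stochastic) policy. -/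
def IsPolicy (π : S → A → ℝ) : Prop :=
  (∀ s a, 0 ≤ π s a) ∧ ∀ s, ∑ a : A, π s a = 1

/-- Marginal state distribution at step `h` under policy `π`. -/
noncomputable def stateDist (M : MDP S A) (π : S → A → ℝ) : ℕ → S → ℝ
  | 0 => M.ρ
  | h + 1 => fun s' => ∑ s : S, ∑ a : A, stateDist M π h s * π s a * M.P s a s'

/-- Expected discounted return of `π` from the initial distribution. -/
noncomputable def value (M : MDP S A) (π : S → A → ℝ) : ℝ :=
  ∑' h : ℕ, M.γ ^ h * ∑ s : S, ∑ a : A, stateDist M π h s * π s a * M.r s a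

/-- State-action distribution at step `h` under `π`, starting from `init`. -/
noncomputable def saDist (M : MDP S A) (π : S → A → ℝ) (init : S × A → ℝ) :
    ℕ → S × A → ℝ
  | 0 => init
  | h + 1 => fun p => ∑ q : S × A, saDist M π init h q * M.P q.1 q.2 p.1 * π p.1 p.2

open Classical in
/-- Action-value function `Q^π(s,a)`: discounted sum of expected rewards when
starting from the state-action pair `(s, a)` and following `π` afterwards. -/
noncomputable def Qf (M : MDP S A) (π : S → A → ℝ) (s : S) (a : A) : ℝ :=
  ∑' h : ℕ, M.γ ^ h * ∑ p : S × A,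
    saDist M π (fun q => if q = (s, a) then 1 else 0) h p * M.r p.1 p.2

/-- State-value function `V^π(s)`. -/
noncomputable def Vf (M : MDP S A) (π : S → A → ℝ) (s : S) : ℝ :=
  ∑ a : A, π s a * Qf M π s a

/-- The absorbing-augmented MDP `M'`: the extra state `none = s_abs` and extra
action `none = a_abs` give zero reward and lead deterministically to `s_abs`. -/
noncomputable def absorb (M : MDP S A) : MDP (Option S) (Option A) where
  P := fun s a s' =>
    match s, a with
    | some s0, some a0 => (match s' with | some t => M.P s0 a0 t | none => 0)
    | _, _ => (match s' with | none => 1 | some _ => 0)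
  r := fun s a =>
    match s, a with
    | some s0, some a0 => M.r s0 a0
    | _, _ => 0
  γ := M.γ
  ρ := fun s => match s with | some s0 => M.ρ s0 | none => 0

/-- The ζ-constrained policy projection `Ξ`: it keeps the probability
`ζ(s,a)·π(a|s)` on supported actions `a ∈ A` and sends all remaining mass
to the absorbing action `a_abs = none`. -/
noncomputable def proj (ζ : Option S → Option A → ℝ) (π : Option S → Option A → ℝ) :
    Option S → Option A → ℝ :=
  fun s a =>
    match a with
    | some _ => ζ s a * π s a
    | none => ∑ a' : Option A, π s a' * (1 - ζ s a')

/-!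
By the performance difference lemma,
`v^π̃ - v^{π_t} = ∑_h γ^h E_{s ∼ η_h^{π_t}} [V^π̃(s) - Q^π̃(s, π_t s)]`;
it follows by telescoping the Bellman equation `Q = r + γ P V` along the state distributions
of `π_t`, and all series converge because the state-action transition matrix is row-stochastic.
At a fixed state, `π̃` lives on `{ζ = 1} ∪ {a_abs}` and `Q^π̃(·, a_abs) = 0`, so
`V^π̃ = E_{π̃}[ζ (Q^π̃ - f_t)] + E_{π̃}[ζ f_t]`; greediness bounds the second term by
`ζ f_t (s, π_t s)`, and `Q^π̃ ≥ 0` gives `ζ Q^π̃ (s, π_t s) ≤ Q^π̃ (s, π_t s)`, which leaves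
exactly the two evaluation errors.
-/

open Finset Matrix

namespace MDP

variable (N : MDP S A) (π : S → A → ℝ)

def saTransition : Matrix (S × A) (S × A) ℝ :=
  Matrix.of fun q p => N.P q.1 q.2 p.1 * π p.1 p.2

def rewardVec : S × A → ℝ := fun p => N.r p.1 p.2

end MDP

lemma IsValidMDP.discount_nonneg {N : MDP S A} (hN : IsValidMDP N) : 0 ≤ N.γ :=
  hN.2.2.2.2.1

lemma IsValidMDP.discount_lt_one {N : MDP S A} (hN : IsValidMDP N) : N.γ < 1 := hN.2.2.2.2.2

lemma Matrix.norm_mulVec_le_of_mem_rowStochastic {n : Type*} [Fintype n] [DecidableEq n]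
    {M : Matrix n n ℝ} (hM : M ∈ rowStochastic ℝ n) (v : n → ℝ) : ‖M *ᵥ v‖ ≤ ‖v‖ := by
  refine (pi_norm_le_iff_of_nonneg (norm_nonneg v)).mpr fun i => ?_
  calc ‖(M *ᵥ v) i‖ ≤ ∑ j, ‖M i j * v j‖ := norm_sum_le _ _
    _ ≤ ∑ j, M i j * ‖v‖ := by
        gcongr with j
        rw [norm_mul, Real.norm_of_nonneg (nonneg_of_mem_rowStochastic hM)]
        gcongr
        · exact nonneg_of_mem_rowStochastic hM
        · exact norm_le_pi_norm v j
    _ = ‖v‖ := by rw [← sum_mul, sum_row_of_mem_rowStochastic hM, one_mul]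

lemma abs_sum_mul_le_sum_abs {ι : Type*} [Fintype ι] {w : ι → ℝ} (hw : w ∈ stdSimplex ℝ ι)
    (x : ι → ℝ) : |∑ i, w i * x i| ≤ ∑ i, |x i| :=
  calc |∑ i, w i * x i| ≤ ∑ i, |w i * x i| := abs_sum_le_sum_abs _ _
    _ ≤ ∑ i, |x i| := sum_le_sum fun i _ => by
        rw [abs_mul, abs_of_nonneg (hw.1 i)]
        exact mul_le_of_le_one_left (abs_nonneg _) (mem_Icc_of_mem_stdSimplex hw i).2

section FiniteMDP

variable {N : MDP S A} {π : S → A → ℝ}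

section TransitionMatrix

variable [DecidableEq S] [DecidableEq A]

lemma saTransition_mem_rowStochastic (hN : IsValidMDP N) (hπ : IsPolicy π) :
    N.saTransition π ∈ rowStochastic ℝ (S × A) := by
  refine mem_rowStochastic_iff_sum.mpr
    ⟨fun q p => mul_nonneg (hN.1 _ _ _) (hπ.1 _ _), fun q => ?_⟩
  simp [MDP.saTransition, Fintype.sum_prod_type, ← mul_sum, hπ.2, hN.2.1]

lemma saDist_eq_vecMul (init : S × A → ℝ) (h : ℕ) :
    saDist N π init h = init ᵥ* N.saTransition π ^ h := by
  induction h with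
  | zero => simp [saDist]
  | succ h ih =>
    rw [pow_succ, ← vecMul_vecMul, ← ih]
    funext p
    simp [saDist, vecMul, dotProduct, MDP.saTransition, mul_assoc]

lemma stateDist_mul_eq_vecMul (h : ℕ) :
    (fun p : S × A => stateDist N π h p.1 * π p.1 p.2) =
      (fun p : S × A => N.ρ p.1 * π p.1 p.2) ᵥ* N.saTransition π ^ h := by
  induction h with
  | zero => simp [stateDist]
  | succ h ih =>
    rw [pow_succ, ← vecMul_vecMul, ← ih]
    funext p
    simp [vecMul, dotProduct, MDP.saTransition, stateDist, Fintype.sum_prod_type, sum_mul,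
      mul_assoc]

lemma Qf_eq_tsum (s : S) (a : A) :
    Qf N π s a = ∑' h, N.γ ^ h * (N.saTransition π ^ h *ᵥ N.rewardVec) (s, a) := by
  refine tsum_congr fun h => congrArg (N.γ ^ h * ·) ?_
  rw [saDist_eq_vecMul]
  change (_ : S × A → ℝ) ⬝ᵥ N.rewardVec = _
  rw [← dotProduct_mulVec]
  simp [dotProduct]

lemma hasSum_Qf (hN : IsValidMDP N) (hπ : IsPolicy π) :
    HasSum (fun h => N.γ ^ h • (N.saTransition π ^ h *ᵥ N.rewardVec))
      (Function.uncurry (Qf N π)) := by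
  have hT := saTransition_mem_rowStochastic hN hπ
  have hγ := hN.discount_nonneg
  have hsum : Summable fun h => N.γ ^ h • (N.saTransition π ^ h *ᵥ N.rewardVec) := by
    refine .of_norm_bounded
      ((summable_geometric_of_lt_one hγ hN.discount_lt_one).mul_right ‖N.rewardVec‖) fun h => ?_
    rw [norm_smul, Real.norm_of_nonneg (pow_nonneg hγ h)]
    exact mul_le_mul_of_nonneg_left (norm_mulVec_le_of_mem_rowStochastic (pow_mem hT h) _)
      (pow_nonneg hγ h)
  refine Pi.hasSum.mpr fun x => ?_
  convert (Pi.summable.mp hsum x).hasSum using 1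
  exact Qf_eq_tsum x.1 x.2

end TransitionMatrix

lemma uncurry_Qf_eq_reward_add (hN : IsValidMDP N) (hπ : IsPolicy π) :
    Function.uncurry (Qf N π) =
      N.rewardVec + N.γ • (N.saTransition π *ᵥ Function.uncurry (Qf N π)) := by
  classical
  have hQ := hasSum_Qf hN hπ
  have htail := (hasSum_nat_add_iff' 1).mpr hQ
  have hmap := (hQ.map (Matrix.mulVecLin (N.saTransition π))
    (continuous_const.matrix_mulVec continuous_id)).const_smul N.γ
  have := htail.unique (hmap.congr_fun ?_)
  · exact sub_eq_iff_eq_add'.mp (by simpa using this)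
  · intro h
    simp [pow_succ', mulVec_mulVec, smul_smul]

lemma Qf_eq_reward_add (hN : IsValidMDP N) (hπ : IsPolicy π) (s : S) (a : A) :
    Qf N π s a = N.r s a + N.γ * ∑ s', N.P s a s' * Vf N π s' := by
  rw [show Qf N π s a = _ from congrFun (uncurry_Qf_eq_reward_add hN hπ) (s, a)]
  simp [MDP.rewardVec, MDP.saTransition, mulVec, dotProduct, Fintype.sum_prod_type, Vf, mul_sum,
    mul_assoc]

lemma value_eq_sum_rho_mul_Vf (hN : IsValidMDP N) (hπ : IsPolicy π) :
    value N π = ∑ s, N.ρ s * Vf N π s := by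
  classical
  set μ₀ : S × A → ℝ := fun p => N.ρ p.1 * π p.1 p.2
  have hterm : ∀ h, N.γ ^ h * ∑ s, ∑ a, stateDist N π h s * π s a * N.r s a =
      μ₀ ⬝ᵥ (N.γ ^ h • (N.saTransition π ^ h *ᵥ N.rewardVec)) := by
    intro h
    rw [dotProduct_smul, dotProduct_mulVec, ← stateDist_mul_eq_vecMul]
    simp [dotProduct, Fintype.sum_prod_type, MDP.rewardVec]
  have hsum : HasSum (fun h => μ₀ ⬝ᵥ (N.γ ^ h • (N.saTransition π ^ h *ᵥ N.rewardVec)))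
      (μ₀ ⬝ᵥ Function.uncurry (Qf N π)) :=
    hasSum_sum fun p _ => (Pi.hasSum.mp (hasSum_Qf hN hπ) p).mul_left (μ₀ p)
  rw [value, funext hterm, hsum.tsum_eq]
  simp [μ₀, dotProduct, Fintype.sum_prod_type, Vf, mul_sum, mul_assoc]

lemma stateDist_mem_stdSimplex (hN : IsValidMDP N) (hπ : IsPolicy π) (h : ℕ) :
    stateDist N π h ∈ stdSimplex ℝ S := by
  induction h with
  | zero => exact ⟨hN.2.2.1, hN.2.2.2.1⟩
  | succ h ih =>
    refine ⟨fun s' => sum_nonneg fun s _ => sum_nonneg fun a _ =>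
      mul_nonneg (mul_nonneg (ih.1 s) (hπ.1 s a)) (hN.1 s a s'), ?_⟩
    simp only [stateDist]
    rw [sum_comm]
    simp only [sum_comm (γ := S), ← mul_sum, hN.2.1, mul_one, hπ.2, ih.2]

lemma summable_discounted_expectation (hN : IsValidMDP N) (hπ : IsPolicy π) (x : S → ℝ) :
    Summable fun h => N.γ ^ h * ∑ s, stateDist N π h s * x s := by
  have hγ := hN.discount_nonneg
  refine .of_norm_bounded
    ((summable_geometric_of_lt_one hγ hN.discount_lt_one).mul_right (∑ s, |x s|)) fun h => ?_
  rw [norm_mul, Real.norm_of_nonneg (pow_nonneg hγ h), Real.norm_eq_abs]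
  exact mul_le_mul_of_nonneg_left (abs_sum_mul_le_sum_abs (stateDist_mem_stdSimplex hN hπ h) x)
    (pow_nonneg hγ h)

theorem value_sub_value_eq_tsum {μ : S → A → ℝ} (hN : IsValidMDP N) (hμ : IsPolicy μ)
    (hπ : IsPolicy π) :
    value N μ - value N π =
      ∑' h, N.γ ^ h * ∑ s, stateDist N π h s * (Vf N μ s - ∑ a, π s a * Qf N μ s a) := by
  set c : ℕ → ℝ := fun h => N.γ ^ h * ∑ s, stateDist N π h s * Vf N μ s
  set e : ℕ → ℝ := fun h => N.γ ^ h * ∑ s, stateDist N π h s * ∑ a, π s a * N.r s a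
  have hc : Summable c := summable_discounted_expectation hN hπ _
  have hc' : Summable fun h => c (h + 1) := (summable_nat_add_iff 1).mpr hc
  have he : Summable e := summable_discounted_expectation hN hπ _
  have hvalue : value N π = ∑' h, e h := by
    simp only [value, e, mul_sum, mul_assoc]
  have hnext : ∀ h, ∑ s', stateDist N π (h + 1) s' * Vf N μ s' =
      ∑ s, stateDist N π h s * ∑ a, π s a * ∑ s', N.P s a s' * Vf N μ s' := by
    intro h
    simp only [stateDist, sum_mul, mul_sum]
    rw [sum_comm]
    refine sum_congr rfl fun s _ => ?_
    rw [sum_comm]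
    simp only [mul_assoc]
  have hstep : ∀ h, N.γ ^ h * ∑ s, stateDist N π h s * (Vf N μ s - ∑ a, π s a * Qf N μ s a) =
      c h - c (h + 1) - e h := by
    intro h
    simp only [c, e, hnext, Qf_eq_reward_add hN hμ, mul_add, sum_add_distrib, mul_sub,
      sum_sub_distrib, mul_left_comm _ N.γ, ← mul_sum, pow_succ]
    ring
  calc value N μ - value N π = c 0 - ∑' h, e h := by
        simp [c, hvalue, value_eq_sum_rho_mul_Vf hN hμ, stateDist]
    _ = ∑' h, c h - ∑' h, c (h + 1) - ∑' h, e h := by rw [hc.tsum_eq_zero_add]; ring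
    _ = _ := by
        rw [← hc.tsum_sub hc', ← (hc.sub hc').tsum_sub he]
        exact tsum_congr fun h => (hstep h).symm

lemma Qf_nonneg (hN : IsValidMDP N) (hπ : IsPolicy π) (hr : ∀ s a, 0 ≤ N.r s a)
    (s : S) (a : A) : 0 ≤ Qf N π s a := by
  classical
  refine (Pi.hasSum.mp (hasSum_Qf hN hπ) (s, a)).nonneg fun h => ?_
  exact mul_nonneg (pow_nonneg hN.discount_nonneg h) <| nonneg_mulVec_of_mem_rowStochastic
    (pow_mem (saTransition_mem_rowStochastic hN hπ) h) (fun p => hr p.1 p.2) _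

end FiniteMDP

lemma isPolicy_ite {α β : Type} [Fintype β] [DecidableEq β] (f : α → β) :
    IsPolicy fun x b => if b = f x then (1 : ℝ) else 0 :=
  ⟨fun x b => by by_cases h : b = f x <;> simp [h], fun x => by simp⟩

section Absorb

variable {M : MDP S A}

lemma IsValidMDP.absorb (hM : IsValidMDP M) : IsValidMDP (absorb M) := by
  refine ⟨?_, ?_, ?_, ?_, hM.discount_nonneg, hM.discount_lt_one⟩
  · rintro (_ | s) (_ | a) (_ | s') <;> simp [_root_.absorb, hM.1]
  · rintro (_ | s) (_ | a) <;> simp [_root_.absorb, Fintype.sum_option, hM.2.1]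
  · rintro (_ | s) <;> simp [_root_.absorb, hM.2.2.1]
  · simpa [_root_.absorb, Fintype.sum_option] using hM.2.2.2.1

lemma absorb_r_nonneg (hr : ∀ s a, 0 ≤ M.r s a) (s : Option S) (a : Option A) :
    0 ≤ (absorb M).r s a := by
  cases s <;> cases a <;> simp [absorb, hr]

-- Every action at `s_abs`, and `a_abs` at every state, leads to `s_abs`; hence
-- `V(s_abs) = γ V(s_abs)`.
lemma Qf_absorb_none (hM : IsValidMDP M) {π : Option S → Option A → ℝ} (hπ : IsPolicy π)
    (s : Option S) : Qf (absorb M) π s none = 0 := by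
  have hBellman := Qf_eq_reward_add hM.absorb hπ
  have hQ : ∀ s a, (s = none ∨ a = none) →
      Qf (absorb M) π s a = M.γ * Vf (absorb M) π none := by
    rintro s a h
    rw [hBellman]
    rcases h with rfl | rfl
    · cases a <;> simp [absorb, Fintype.sum_option]
    · cases s <;> simp [absorb, Fintype.sum_option]
  have hV : Vf (absorb M) π none = 0 := by
    have hfix : Vf (absorb M) π none = M.γ * Vf (absorb M) π none := by
      show ∑ a, π none a * Qf (absorb M) π none a = _
      rw [sum_congr rfl fun a _ => by rw [hQ none a (.inl rfl)], ← sum_mul, hπ.2, one_mul]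
    nlinarith [hM.discount_lt_one]
  rw [hQ s none (.inr rfl), hV, mul_zero]

end Absorb

lemma sum_mul_sub_le_of_greedy {ι : Type*} [Fintype ι] {p Q ζ f : ι → ℝ} {b : ι}
    (hp : p ∈ stdSimplex ℝ ι) (hQb : 0 ≤ Q b) (hζb : ζ b ≤ 1)
    (hgreedy : ∀ a, ζ a * f a ≤ ζ b * f b) (hsupp : ∀ a, 0 < p a → ζ a * Q a = Q a) :
    ∑ a, p a * Q a - Q b ≤ ∑ a, p a * |ζ a * (Q a - f a)| + |ζ b * (Q b - f b)| := by
  have hsplit : ∑ a, p a * Q a =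
      ∑ a, p a * (ζ a * (Q a - f a)) + ∑ a, p a * (ζ a * f a) := by
    rw [← sum_add_distrib]
    refine sum_congr rfl fun a _ => ?_
    rcases (hp.1 a).eq_or_lt with h | h
    · simp [← h]
    · conv_lhs => rw [← hsupp a h]
      ring
  have herr : ∑ a, p a * (ζ a * (Q a - f a)) ≤ ∑ a, p a * |ζ a * (Q a - f a)| :=
    sum_le_sum fun a _ => mul_le_mul_of_nonneg_left (le_abs_self _) (hp.1 a)
  have hf : ∑ a, p a * (ζ a * f a) ≤ ζ b * f b :=
    calc ∑ a, p a * (ζ a * f a) ≤ ∑ a, p a * (ζ b * f b) :=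
          sum_le_sum fun a _ => mul_le_mul_of_nonneg_left (hgreedy a) (hp.1 a)
      _ = ζ b * f b := by rw [← sum_mul, hp.2, one_mul]
  have hb : ζ b * Q b ≤ Q b := mul_le_of_le_one_left hQb hζb
  linarith [neg_abs_le (ζ b * (Q b - f b))]

open Classical in
theorem value_gap_decomposition_general (M : MDP S A) (hM : IsValidMDP M)
    (hr : ∀ s a, 0 ≤ M.r s a)
    (ζ : Option S → Option A → ℝ)
    (hζ01 : ∀ s a, ζ s a = 0 ∨ ζ s a = 1)
    (ft : Option S → Option A → ℝ)
    (πt : Option S → Option A)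
    (hgreedy : ∀ s a, ζ s a * ft s a ≤ ζ s (πt s) * ft s (πt s))
    (πtil : Option S → Option A → ℝ) (hπtil : IsPolicy πtil)
    (hsupp : ∀ s a, 0 < πtil s a → ζ s a = 1 ∨ a = none) :
    value (absorb M) πtil -
        value (absorb M) (fun s a => if a = πt s then (1 : ℝ) else 0) ≤
      ∑' h : ℕ, M.γ ^ h *
        ((∑ s : Option S, ∑ a : Option A,
            stateDist (absorb M) (fun s a => if a = πt s then (1 : ℝ) else 0) h s *
              πtil s a *
              |ζ s a * (Qf (absorb M) πtil s a - ft s a)|) +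
          ∑ s : Option S,
            stateDist (absorb M) (fun s a => if a = πt s then (1 : ℝ) else 0) h s *
              |ζ s (πt s) * (Qf (absorb M) πtil s (πt s) - ft s (πt s))|) := by
  set πd : Option S → Option A → ℝ := fun s a => if a = πt s then 1 else 0
  set Q := Qf (absorb M) πtil
  set err : Option S → ℝ := fun s =>
    ∑ a, πtil s a * |ζ s a * (Q s a - ft s a)| + |ζ s (πt s) * (Q s (πt s) - ft s (πt s))|
  have hN := hM.absorb
  have hπd : IsPolicy πd := isPolicy_ite πt
  have hgap : ∀ s, Vf (absorb M) πtil s - ∑ a, πd s a * Q s a ≤ err s := fun s => by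
    rw [show ∑ a, πd s a * Q s a = Q s (πt s) by simp [πd]]
    exact sum_mul_sub_le_of_greedy (p := πtil s) ⟨hπtil.1 s, hπtil.2 s⟩
      (Qf_nonneg hN hπtil (absorb_r_nonneg hr) s (πt s))
      (by rcases hζ01 s (πt s) with h | h <;> simp [h])
      (hgreedy s) fun a ha => by
        rcases hsupp s a ha with h | rfl
        · rw [h, one_mul]
        · rw [Qf_absorb_none hM hπtil s, mul_zero]
  have hη : ∀ h s, 0 ≤ stateDist (absorb M) πd h s := fun h =>
    (stateDist_mem_stdSimplex hN hπd h).1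
  calc _ = ∑' h, M.γ ^ h * ∑ s, stateDist (absorb M) πd h s *
        (Vf (absorb M) πtil s - ∑ a, πd s a * Q s a) := value_sub_value_eq_tsum hN hπtil hπd
    _ ≤ ∑' h, M.γ ^ h * ∑ s, stateDist (absorb M) πd h s * err s :=
        Summable.tsum_le_tsum (fun h => mul_le_mul_of_nonneg_left
            (sum_le_sum fun s _ => mul_le_mul_of_nonneg_left (hgap s) (hη h s))
            (pow_nonneg hM.discount_nonneg h))
          (summable_discounted_expectation hN hπd _) (summable_discounted_expectation hN hπd _)
    _ = _ := tsum_congr fun h => by simp [err, mul_add, sum_add_distrib, mul_sum, mul_assoc]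

open Classical in
/-- For a deterministic policy `π_t` that is greedy with
respect to `ζ·f_t` and any comparator policy `π̃` supported on `{ζ = 1} ∪ {a_abs}`,
the value gap is controlled by the ζ-filtered evaluation errors:
`v^{π̃} − v^{π_t} ≤ Σ_h γ^h (‖ζ(Q^{π̃} − f_t)‖_{1,η_h^{π_t}×π̃} + ‖ζ(Q^{π̃} − f_t)‖_{1,η_h^{π_t}×π_t})`. -/
theorem value_gap_decomposition (M : MDP S A) (hM : IsValidMDP M)
    (hr : ∀ s a, 0 ≤ M.r s a)
    (ζ : Option S → Option A → ℝ)
    (hζ01 : ∀ s a, ζ s a = 0 ∨ ζ s a = 1)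
    (hζa : ∀ s, ζ s none = 0) (hζs : ∀ a, ζ none a = 0)
    (ft : Option S → Option A → ℝ)
    (hftnn : ∀ s a, 0 ≤ ft s a)
    (hfta : ∀ s, ft s none = 0) (hfts : ∀ a, ft none a = 0)
    (πt : Option S → Option A)
    (hgreedy : ∀ s a, ζ s a * ft s a ≤ ζ s (πt s) * ft s (πt s))
    (πtil : Option S → Option A → ℝ) (hπtil : IsPolicy πtil)
    (hsupp : ∀ s a, 0 < πtil s a → ζ s a = 1 ∨ a = none) :
    value (absorb M) πtil -
        value (absorb M) (fun s a => if a = πt s then (1 : ℝ) else 0) ≤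
      ∑' h : ℕ, M.γ ^ h *
        ((∑ s : Option S, ∑ a : Option A,
            stateDist (absorb M) (fun s a => if a = πt s then (1 : ℝ) else 0) h s *
              πtil s a *
              |ζ s a * (Qf (absorb M) πtil s a - ft s a)|) +
          ∑ s : Option S,
            stateDist (absorb M) (fun s a => if a = πt s then (1 : ℝ) else 0) h s *
              |ζ s (πt s) * (Qf (absorb M) πtil s (πt s) - ft s (πt s))|) :=
  value_gap_decomposition_general M hM hr ζ hζ01 ft πt hgreedy πtil hπtil hsupp
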